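/- arXiv:2401.14059 — 3 statements merged into one kernel-verified Lean document; each statement's English description precedes it below -/
import Mathlib

section
/- Let A and C be categories with C locally small, let B be a small category with all small limits, and let α : A ⥤ C and β : B ⥤ C be functors such that β preserves small limits. Fix objects a in A and b in B and a morphism F : α.obj a ⟶ β.obj b in C. Then for every morphism f : a' ⟶ a in A there exists a universal completion of (f, F); that is, there exist an object b' of B, a morphism g : b' ⟶ b in B and a morphism τ : α.obj a' ⟶ β.obj b' in C with τ ≫ β.map g = α.map f ≫ F, such that for every triple (b'', g'' : b'' ⟶ b, τ' : α.obj a' ⟶ β.obj b'') with τ' ≫ β.map g'' = α.map f ≫ F there is a unique morphism φ : b' ⟶ b'' in B with τ ≫ β.map φ = τ' and φ ≫ g'' = g. -/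
open CategoryTheory CategoryTheory.Limits

universe u v₁ u₁ u₂

/-! Completions of `(f, F)` form an over category of structured arrows under `α.obj a'`, which is
small and, because `β` preserves limits, complete. The limit of the identity functor of such a
category is an initial object, and an initial completion is universal. -/

/-- A completion `(b', g, τ)` of the L-shaped diagram `(f, F)` is universal if every other
completion factors through it by a unique morphism of `B`. -/
def IsUniversalCompletion {A : Type u₁} [Category.{v₁} A] {B : Type u} [SmallCategory B]
    {C : Type u₂} [Category.{u} C] (α : A ⥤ C) (β : B ⥤ C)
    {a a' : A} {b : B} (f : a' ⟶ a) (F : α.obj a ⟶ β.obj b)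
    (b' : B) (g : b' ⟶ b) (τ : α.obj a' ⟶ β.obj b') : Prop :=
  τ ≫ β.map g = α.map f ≫ F ∧
    ∀ (b'' : B) (g'' : b'' ⟶ b) (τ' : α.obj a' ⟶ β.obj b''),
      τ' ≫ β.map g'' = α.map f ≫ F →
        ∃! φ : b' ⟶ b'', τ ≫ β.map φ = τ' ∧ φ ≫ g'' = g

-- The cone condition `limit.π _ X ≫ m = limit.π _ Y` for `m : X ⟶ Y` forces `limit.π _ X = 𝟙`.
noncomputable def isInitialLimitId (D : Type*) [Category D] [HasLimit (𝟭 D)] : IsInitial (limit (𝟭 D)) :=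
  have cone_w : ∀ {Y : D} (m : limit (𝟭 D) ⟶ Y),
      limit.π (𝟭 D) (limit (𝟭 D)) ≫ m = limit.π (𝟭 D) Y :=
    fun m => limit.w (𝟭 D) m
  have π_self : limit.π (𝟭 D) (limit (𝟭 D)) = 𝟙 _ :=
    limit.hom_ext fun Y => by simpa using cone_w (limit.π (𝟭 D) Y)
  IsInitial.ofUniqueHom (limit.π (𝟭 D)) fun Y m => by simpa [π_self] using cone_w m

section Completion

variable {A : Type u₁} [Category.{v₁} A] {B : Type u} [SmallCategory B]
  {C : Type u₂} [Category.{u} C] (α : A ⥤ C) (β : B ⥤ C)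
  {a a' : A} {b : B} (f : a' ⟶ a) (F : α.obj a ⟶ β.obj b)

/-- The category of completions of `(f, F)`: an object over `(b, α.map f ≫ F)` is a completion
`(b', g, τ)`, stored as the structured arrow `τ` together with the morphism `g` of `B`. -/
abbrev Completion : Type u :=
  Over (StructuredArrow.mk (α.map f ≫ F) : StructuredArrow (α.obj a') β)

variable {α β f F}

theorem isUniversalCompletion_of_isInitial {I : Completion α β f F} (hI : IsInitial I) :
    IsUniversalCompletion α β f F I.left.right I.hom.right I.left.hom := by
  refine ⟨StructuredArrow.w I.hom, fun b'' g'' τ' hτ' => ?_⟩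
  let Y : Completion α β f F :=
    Over.mk (Y := StructuredArrow.mk τ') (StructuredArrow.homMk g'' (by simpa using hτ'))
  refine ⟨(hI.to Y).left.right, ⟨StructuredArrow.w (hI.to Y).left, ?_⟩, ?_⟩
  · exact congrArg CommaMorphism.right (Over.w (hI.to Y))
  · rintro φ ⟨hτ, hg⟩
    let φ' : I ⟶ Y := Over.homMk (StructuredArrow.homMk φ hτ) (by ext; exact hg)
    exact congrArg (fun m => m.left.right) (hI.hom_ext φ' (hI.to Y))

end Completion

theorem exists_universal_completion
    {A : Type u₁} [Category.{v₁} A] {B : Type u} [SmallCategory B] [HasLimits B]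
    {C : Type u₂} [Category.{u} C] (α : A ⥤ C) (β : B ⥤ C) [PreservesLimits β]
    (a : A) (b : B) (F : α.obj a ⟶ β.obj b) {a' : A} (f : a' ⟶ a) :
    ∃ (b' : B) (g : b' ⟶ b) (τ : α.obj a' ⟶ β.obj b'),
      IsUniversalCompletion α β f F b' g τ :=
  ⟨_, _, _, isUniversalCompletion_of_isInitial (isInitialLimitId (Completion α β f F))⟩
end

section
/- Let A and C be categories with C locally small, let B be a small category with all small limits, and let α : A ⥤ C and β : B ⥤ C be functors such that β preserves small limits. Fix objects a in A and b in B and a morphism F : α.obj a ⟶ β.obj b in C. Then there exists a functor τ̄_F : Over a ⥤ Comma (Comma.snd α β) (Functor.fromPUnit b) such that for every object f of Over a: (i) the first component of the Comma-(α,β) part of τ̄_F.obj f is the object f.left of A (so that composing τ̄_F with the projection to Comma α β and then with Comma.fst : Comma α β ⥤ A recovers Over.forget a); and (ii) writing the value τ̄_F.obj f as a comma object (f.left, b'_f, τ_f : α.obj f.left ⟶ β.obj b'_f) of Comma α β together with a morphism g_f : b'_f ⟶ b in B, the triple (b'_f, g_f, τ_f) is a universal completion of (f.hom, F). -/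
/-!
A small complete category `B` satisfies the solution set condition trivially (the family of all
morphisms `X ⟶ β.obj b'` is small), so by the general adjoint functor theorem the
limit-preserving `β` has a left adjoint `L`. The universal completion of `(f, F)` is then the
unit `α.obj a' ⟶ β.obj (L.obj (α.obj a'))` together with the transpose `L.obj (α.obj a') ⟶ b` of
`α.map f ≫ F`, and naturality of the unit and of transposition makes it functorial in `f`.
-/

open CategoryTheory CategoryTheory.Limits

universe u v₁ u₁ u₂

namespace CategoryTheory

theorem isRightAdjoint_of_preservesLimits_of_smallCategory {B : Type u} [SmallCategory B]
    [HasLimits B] {C : Type u₂} [Category.{u} C] (G : B ⥤ C) [PreservesLimits G] :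
    G.IsRightAdjoint :=
  isRightAdjoint_of_preservesLimits_of_solutionSetCondition G fun X =>
    ⟨Σ b, X ⟶ G.obj b, fun i => i.1, fun i => i.2, fun b h => ⟨⟨b, h⟩, 𝟙 b, by simp⟩⟩

variable {A : Type*} [Category* A] {B : Type*} [Category* B] {C : Type*} [Category* C]
  {T : Type*} [Category* T]

def Comma.lift {L : A ⥤ T} {R : B ⥤ T} {D : Type*} [Category* D] (F : D ⥤ A) (G : D ⥤ B)
    (η : F ⋙ L ⟶ G ⋙ R) : D ⥤ Comma L R where
  obj X := ⟨F.obj X, G.obj X, η.app X⟩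
  map f := ⟨F.map f, G.map f, η.naturality f⟩

def Adjunction.unitComma {L : C ⥤ B} {R : B ⥤ C} (adj : L ⊣ R) (α : A ⥤ C) : A ⥤ Comma α R :=
  Comma.lift (𝟭 A) (α ⋙ L) (Functor.whiskerLeft α adj.unit)

end CategoryTheory

section

variable {A : Type u₁} [Category.{v₁} A] {B : Type u} [SmallCategory B]
  {C : Type u₂} [Category.{u} C] (α : A ⥤ C) {β : B ⥤ C} {L : C ⥤ B} (adj : L ⊣ β)

theorem isUniversalCompletion_unit {a a' : A} {b : B} (f : a' ⟶ a) (F : α.obj a ⟶ β.obj b) :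
    IsUniversalCompletion α β f F (L.obj (α.obj a'))
      ((adj.homEquiv _ _).symm (α.map f ≫ F)) (adj.unit.app (α.obj a')) := by
  refine ⟨by simp [← Adjunction.homEquiv_unit], fun b'' g'' τ' hτ' => ?_⟩
  refine ⟨(adj.homEquiv _ _).symm τ', ⟨by simp [← Adjunction.homEquiv_unit], ?_⟩, ?_⟩
  · rw [← Adjunction.homEquiv_naturality_right_symm, hτ']
  · rintro φ ⟨hφ, -⟩
    rw [← hφ, ← Adjunction.homEquiv_unit, Equiv.symm_apply_apply]

def liftedInducedFunctor (a : A) {b : B} (F : α.obj a ⟶ β.obj b) :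
    Over a ⥤ Comma (Comma.snd α β) (Functor.fromPUnit b) :=
  Comma.lift (Over.forget a ⋙ adj.unitComma α) ((Functor.const _).obj ⟨PUnit.unit⟩)
    { app := fun f => (adj.homEquiv (α.obj f.left) b).symm (α.map f.hom ≫ F)
      naturality := fun f₁ f₂ k => by
        change L.map (α.map k.left) ≫ _ = _ ≫ 𝟙 b
        rw [Category.comp_id, ← Adjunction.homEquiv_naturality_left_symm, ← α.map_comp_assoc,
          Over.w k] }

end

theorem exists_lifted_induced_functor
    {A : Type u₁} [Category.{v₁} A] {B : Type u} [SmallCategory B] [HasLimits B]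
    {C : Type u₂} [Category.{u} C] (α : A ⥤ C) (β : B ⥤ C) [PreservesLimits β]
    (a : A) (b : B) (F : α.obj a ⟶ β.obj b) :
    ∃ T : Over a ⥤ Comma (Comma.snd α β) (Functor.fromPUnit b),
      ∃ h : ∀ f : Over a, (T.obj f).left.left = f.left,
        (T ⋙ Comma.fst (Comma.snd α β) (Functor.fromPUnit b) ⋙ Comma.fst α β
            = Over.forget a) ∧
        ∀ f : Over a,
          IsUniversalCompletion α β f.hom F
            (T.obj f).left.right (T.obj f).hom
            (eqToHom (congrArg α.obj (h f).symm) ≫ (T.obj f).left.hom) := by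
  have := isRightAdjoint_of_preservesLimits_of_smallCategory β
  let adj := Adjunction.ofIsRightAdjoint β
  refine ⟨liftedInducedFunctor α adj a F, fun _ => rfl, rfl, fun f => ?_⟩
  have universal := isUniversalCompletion_unit α adj f.hom F
  -- the goal's `eqToHom rfl ≫ _` is `𝟙 _ ≫ _` only up to unfolding, so match it syntactically
  rw [← Category.id_comp (adj.unit.app _)] at universal
  exact universal
end

section
/- Let X be a small category which is a preorder (between any two objects there is at most one morphism) and which has all small limits, and let ι : X ⥤ Grp be a functor into the category of groups that preserves small limits. Let a and b be objects of X and F : ι.obj a ⟶ ι.obj b a group homomorphism. Then there is a monotone assignment sending each object a' of X with a morphism p : a' ⟶ a to an object t(a') of X with a morphism q : t(a') ⟶ b, together with a group homomorphism τ_{a'} : ι.obj a' ⟶ ι.obj t(a') satisfying τ_{a'} ≫ ι.map q = ι.map p ≫ F, such that: (i) (universality) for every object b'' with a morphism r : b'' ⟶ b and every homomorphism τ' : ι.obj a' ⟶ ι.obj b'' with τ' ≫ ι.map r = ι.map p ≫ F, there exists a morphism t(a') ⟶ b'' in X whose ι-image composed after τ_{a'} equals τ'; and (ii) (monotonicity)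 whenever a'' ⟶ a' ⟶ a in X, there is a morphism t(a'') ⟶ t(a') in X over b. -/
/-!
The universal completion of the L-shaped diagram `ι a' ⟶ ι a ⟶ ι b` is the product, taken
in `X`, of all objects `b''` over `b` that complete it. Since `ι` preserves this product, the
completing maps `ι a' ⟶ ι b''` assemble into one map `ι a' ⟶ ι (∏ b'')`, and every completion
factors through it by a product projection. Precomposing completions with `ι u` gives the
comparison map for `a'' ⟶ a'`; it lies over `b` because `X` is thin.
-/

open CategoryTheory CategoryTheory.Limits

universe u

namespace CategoryTheory.Functor

variable {X : Type u} [SmallCategory X] {D : Type*} [Category D] (ι : X ⥤ D) {a b : X}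
  (F : ι.obj a ⟶ ι.obj b)

structure LCompletion {a' : X} (p : a' ⟶ a) : Type u where
  obj : X
  hom : obj ⟶ b
  τ : ι.obj a' ⟶ ι.obj obj
  comm : τ ≫ ι.map hom = ι.map p ≫ F

variable {ι F}

def LCompletion.trivial {a' : X} (p : a' ⟶ a) : ι.LCompletion F p :=
  ⟨b, 𝟙 b, ι.map p ≫ F, by simp⟩

def LCompletion.precomp {a'' a' : X} (u : a'' ⟶ a') {p : a' ⟶ a} (c : ι.LCompletion F p) :
    ι.LCompletion F (u ≫ p) :=
  ⟨c.obj, c.hom, ι.map u ≫ c.τ, by simp [c.comm]⟩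

variable [HasProducts.{u} X] [PreservesLimits ι]

variable (ι F) in
noncomputable def LCompletion.universal {a' : X} (p : a' ⟶ a) : ι.LCompletion F p where
  obj := ∏ᶜ fun c : ι.LCompletion F p => c.obj
  hom := Pi.π _ (trivial p)
  τ := (isLimitOfHasProductOfPreservesLimit ι _).lift (Fan.mk _ fun c : ι.LCompletion F p => c.τ)
  comm := (isLimitOfHasProductOfPreservesLimit ι _).fac _ ⟨trivial p⟩

theorem LCompletion.universal_τ_comp_map_π {a' : X} {p : a' ⟶ a} (c : ι.LCompletion F p) :
    (universal ι F p).τ ≫ ι.map (Pi.π _ c) = c.τ :=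
  (isLimitOfHasProductOfPreservesLimit ι _).fac _ ⟨c⟩

variable (ι F) in
noncomputable def LCompletion.universalMap {a'' a' : X} (u : a'' ⟶ a') (p : a' ⟶ a) :
    (universal ι F (u ≫ p)).obj ⟶ (universal ι F p).obj :=
  Pi.lift fun c => Pi.π _ (c.precomp u)

end CategoryTheory.Functor

open Functor in
theorem preorder_to_Grp_induced_monotone
    {X : Type u} [SmallCategory X] [Quiver.IsThin X] [HasLimits X]
    (ι : X ⥤ GrpCat.{u}) [PreservesLimits ι]
    (a b : X) (F : ι.obj a ⟶ ι.obj b) :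
    ∃ (t : ∀ a' : X, (a' ⟶ a) → X)
      (q : ∀ (a' : X) (p : a' ⟶ a), t a' p ⟶ b)
      (τ : ∀ (a' : X) (p : a' ⟶ a), ι.obj a' ⟶ ι.obj (t a' p)),
      (∀ (a' : X) (p : a' ⟶ a), τ a' p ≫ ι.map (q a' p) = ι.map p ≫ F) ∧
      -- (i) universality
      (∀ (a' : X) (p : a' ⟶ a) (b'' : X) (r : b'' ⟶ b)
          (τ' : ι.obj a' ⟶ ι.obj b''),
        τ' ≫ ι.map r = ι.map p ≫ F →
          ∃ ψ : t a' p ⟶ b'', τ a' p ≫ ι.map ψ = τ') ∧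
      -- (ii) monotonicity
      (∀ (a'' a' : X) (u : a'' ⟶ a') (p : a' ⟶ a),
        ∃ w : t a'' (u ≫ p) ⟶ t a' p, w ≫ q a' p = q a'' (u ≫ p)) := by
  refine ⟨fun _ p => (LCompletion.universal ι F p).obj,
    fun _ p => (LCompletion.universal ι F p).hom, fun _ p => (LCompletion.universal ι F p).τ,
    fun _ p => (LCompletion.universal ι F p).comm, fun _ p b'' r τ' h => ?_,
    fun _ _ u p => ⟨LCompletion.universalMap ι F u p, Subsingleton.elim _ _⟩⟩
  let c : ι.LCompletion F p := ⟨b'', r, τ', h⟩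
  exact ⟨Pi.π _ c, c.universal_τ_comp_map_π⟩
end
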